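/- arXiv:2010.09385 — 4 statements merged into one kernel-verified Lean document; each statement's English description precedes it below -/
import Mathlib

section
/- Let X be a compact metric space, G a metric space, and F : G → Set X an upper semicontinuous set-valued map with nonempty compact values. Then F is continuous (with respect to the Hausdorff metric) at g₀ if and only if every point of F(g₀) is essential. -/
/-- Continuity of an usc correspondence at a point iff every point of its value is essential. -/
theorem continuous_iff_all_essential
    {G X : Type*} [MetricSpace G] [MetricSpace X] [CompactSpace X]
    (F : G → Set X) (g₀ : G)
    (hne : ∀ g, (F g).Nonempty) (hcp : ∀ g, IsCompact (F g))
    (husc : ∀ g₁, ∀ ε > 0, ∃ δ > 0, ∀ g, dist g g₁ < δ →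
      F g ⊆ {x | ∃ y ∈ F g₁, dist x y < ε}) :
    (∀ ε > 0, ∃ δ > 0, ∀ g, dist g g₀ < δ →
        F g₀ ⊆ {x | ∃ y ∈ F g, dist x y < ε}) ↔
    (∀ x ∈ F g₀, ∀ ε > 0, ∃ δ > 0, ∀ g, dist g g₀ < δ →
        ∃ y ∈ F g, dist x y < ε) := by
  constructor
  · intro h x hx ε hε
    obtain ⟨δ, hδ, h'⟩ := h ε hε
    exact ⟨δ, hδ, fun g hg => h' g hg hx⟩
  · intro h ε hε
    -- cover F g₀ by balls of radius ε/2
    obtain ⟨t, hts, hcov⟩ := (hcp g₀).elim_nhds_subcover (fun x => Metric.ball x (ε / 2))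
      (fun x hx => Metric.ball_mem_nhds x (by linarith))
    -- choose δ for each center
    choose! δ hδpos hδ using fun x (hx : x ∈ F g₀) => h x hx (ε / 2) (by linarith)
    have htne : t.Nonempty := by
      obtain ⟨x, hx⟩ := hne g₀
      obtain ⟨y, hy, _⟩ := Set.mem_iUnion₂.mp (hcov hx)
      exact ⟨y, hy⟩
    refine ⟨t.inf' htne δ, ?_, ?_⟩
    · exact (Finset.lt_inf'_iff htne).mpr fun x hx => hδpos x (hts x hx)
    · intro g hg x hx
      obtain ⟨c, hc, hxc⟩ := Set.mem_iUnion₂.mp (hcov hx)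
      have hg' : dist g g₀ < δ c :=
        lt_of_lt_of_le hg (Finset.inf'_le _ hc)
      obtain ⟨y, hy, hcy⟩ := hδ c (hts c hc) g hg'
      refine ⟨y, hy, ?_⟩
      have := Metric.mem_ball.mp hxc
      calc dist x y ≤ dist x c + dist c y := dist_triangle _ _ _
        _ < ε / 2 + ε / 2 := add_lt_add this hcy
        _ = ε := by ring
end

section
/- Let X be a compact metric space and G a complete metric space, and let F : G → Set X be upper semicontinuous with nonempty compact values. Then the set of points g ∈ G at which F is continuous (in the Hausdorff metric) is residual (a countable intersection of dense open sets contains it) and in particular dense in G. -/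
open Set Metric Filter Topology

/-- The set of continuity points of a lower semicontinuous real function is residual. -/
lemma lsc_continuousAt_residual {G : Type*} [TopologicalSpace G] (φ : G → ℝ)
    (h : LowerSemicontinuous φ) : {x | ContinuousAt φ x} ∈ residual G := by
  set N : ℚ × ℚ → Set G :=
    fun q => {x | φ x ≤ (q.1 : ℝ)} ∩ closure {x | (q.2 : ℝ) ≤ φ x} with hN
  have hclosed : ∀ q, IsClosed (N q) :=
    fun q => (h.isClosed_preimage _).inter isClosed_closure
  have hint : ∀ q : ℚ × ℚ, q.1 < q.2 → interior (N q) = ∅ := by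
    intro q hq
    by_contra hne
    obtain ⟨x, hx⟩ := nonempty_iff_ne_empty.2 hne
    have hxcl : x ∈ closure {x | (q.2 : ℝ) ≤ φ x} := (interior_subset hx).2
    rcases mem_closure_iff_nhds.1 hxcl _ (isOpen_interior.mem_nhds hx) with
      ⟨y, hy1, hy2⟩
    have h1 : φ y ≤ (q.1 : ℝ) := (interior_subset hy1).1
    have h2 : (q.2 : ℝ) ≤ φ y := hy2
    have : (q.2 : ℝ) ≤ (q.1 : ℝ) := h2.trans h1
    exact absurd this (not_le.2 (by exact_mod_cast hq))
  have hres : (⋂ q ∈ {q : ℚ × ℚ | q.1 < q.2}, (N q)ᶜ) ∈ residual G := by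
    refine (countable_bInter_mem (Set.to_countable _)).2 fun q hq => ?_
    refine residual_of_dense_open (hclosed q).isOpen_compl ?_
    rw [← interior_eq_empty_iff_dense_compl]
    exact hint q hq
  refine mem_of_superset hres fun x hx => ?_
  simp only [mem_iInter, mem_compl_iff, mem_setOf_eq] at hx
  refine tendsto_order.2 ⟨fun c hc => h x c hc, fun c hc => ?_⟩
  obtain ⟨a, ha1, ha2⟩ := exists_rat_btwn hc
  obtain ⟨b, hb1, hb2⟩ := exists_rat_btwn ha2
  have hab : a < b := by exact_mod_cast hb1
  have hxN : x ∉ N (a, b) := hx (a, b) hab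
  have hxa : φ x ≤ (a : ℝ) := le_of_lt ha1
  have hxcl : x ∉ closure {y | (b : ℝ) ≤ φ y} := fun hcl => hxN ⟨hxa, hcl⟩
  have hopen : IsOpen (closure {y | (b : ℝ) ≤ φ y})ᶜ := isClosed_closure.isOpen_compl
  filter_upwards [hopen.mem_nhds hxcl] with y hy
  have : ¬ ((b : ℝ) ≤ φ y) := fun hb => hy (subset_closure hb)
  linarith

/-- Fort's theorem: the set of continuity points (in Hausdorff distance) of an upper
semicontinuous correspondence with nonempty compact values is residual, hence dense. -/
theorem fort_continuity_points_residual
    {G X : Type*} [MetricSpace G] [CompleteSpace G] [MetricSpace X] [CompactSpace X]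
    (F : G → Set X)
    (hne : ∀ g, (F g).Nonempty) (hcp : ∀ g, IsCompact (F g))
    (husc : ∀ g₁, ∀ ε > 0, ∃ δ > 0, ∀ g, dist g g₁ < δ →
      F g ⊆ {x | ∃ y ∈ F g₁, dist x y < ε}) :
    {g₀ | ∀ ε > 0, ∃ δ > 0, ∀ g, dist g g₀ < δ →
        F g ⊆ {x | ∃ y ∈ F g₀, dist x y < ε} ∧
        F g₀ ⊆ {x | ∃ y ∈ F g, dist x y < ε}} ∈ residual G ∧
    Dense {g₀ | ∀ ε > 0, ∃ δ > 0, ∀ g, dist g g₀ < δ →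
        F g ⊆ {x | ∃ y ∈ F g₀, dist x y < ε} ∧
        F g₀ ⊆ {x | ∃ y ∈ F g, dist x y < ε}} := by
  -- finite (1/(m+1))-nets of X
  have htb : ∀ m : ℕ, ∃ t : Set X, t.Finite ∧
      (univ : Set X) ⊆ ⋃ p ∈ t, ball p (1 / (m + 1 : ℝ)) := by
    intro m
    exact totallyBounded_iff.1 isCompact_univ.totallyBounded _
      (by positivity)
  choose t ht hcov using htb
  -- the distance functions are lower semicontinuous
  set φ : X → G → ℝ := fun p g => infDist p (F g) with hφ
  have hlsc : ∀ p : X, LowerSemicontinuous (φ p) := by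
    intro p g₀ y hy
    set c : ℝ := (φ p g₀ - y) / 2 with hc
    have hcpos : 0 < c := by simp only [hc]; linarith
    obtain ⟨δ, hδ, hδ2⟩ := husc g₀ c hcpos
    have hball : ball g₀ δ ∈ 𝓝 g₀ := ball_mem_nhds _ hδ
    filter_upwards [hball] with g hg
    have hsub := hδ2 g (by rwa [mem_ball] at hg)
    have hlow : ∀ x ∈ F g, y + c ≤ dist p x := by
      intro x hx
      obtain ⟨z, hz, hdz⟩ := hsub hx
      have h1 : infDist p (F g₀) ≤ dist p z := infDist_le_dist_of_mem hz
      have h2 : dist p z ≤ dist p x + dist x z := by rw [dist_comm x z]; exact dist_triangle_right p z x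
      have : φ p g₀ ≤ dist p x + c := by
        calc φ p g₀ ≤ dist p x + dist x z := h1.trans h2
        _ ≤ dist p x + c := by linarith
      simp only [hc] at *
      linarith
    have : ¬ infDist p (F g) < y + c := by
      rw [infDist_lt_iff (hne g)]
      rintro ⟨x, hx, hdx⟩
      exact absurd (hlow x hx) (not_le.2 hdx)
    have := not_lt.1 this
    simp only [hφ]
    linarith
  -- the residual set
  set C : X → Set G := fun p => {g | ContinuousAt (φ p) g} with hC
  set R : Set G := ⋂ m : ℕ, ⋂ p ∈ t m, C p with hR
  have hRres : R ∈ residual G := by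
    refine countable_iInter_mem.2 fun m => ?_
    refine (biInter_mem (ht m)).2 fun p _ => ?_
    exact lsc_continuousAt_residual (φ p) (hlsc p)
  have hmain : R ⊆ {g₀ | ∀ ε > 0, ∃ δ > 0, ∀ g, dist g g₀ < δ →
      F g ⊆ {x | ∃ y ∈ F g₀, dist x y < ε} ∧
      F g₀ ⊆ {x | ∃ y ∈ F g, dist x y < ε}} := by
    intro g₀ hg₀ ε hε
    obtain ⟨δ₁, hδ₁, hδ₁2⟩ := husc g₀ ε hε
    obtain ⟨m, hm⟩ := exists_nat_one_div_lt (show (0:ℝ) < ε / 4 by linarith)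
    have hg₀m : ∀ p ∈ t m, ContinuousAt (φ p) g₀ := by
      intro p hp
      have := mem_iInter.1 hg₀ m
      exact mem_iInter.1 (mem_iInter.1 (mem_iInter.1 hg₀ m) p) hp
    -- uniform continuity over the finite net
    have hev : ∀ᶠ g in 𝓝 g₀, ∀ p ∈ t m, dist (φ p g) (φ p g₀) < ε / 4 := by
      refine (eventually_all_finite (ht m)).2 fun p hp => ?_
      have := hg₀m p hp
      exact (Metric.tendsto_nhds.1 this) (ε / 4) (by linarith)
    obtain ⟨δ₂, hδ₂, hδ₂2⟩ := Metric.eventually_nhds_iff.1 hev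
    refine ⟨min δ₁ δ₂, lt_min hδ₁ hδ₂, fun g hg => ?_⟩
    constructor
    · exact hδ₁2 g (lt_of_lt_of_le hg (min_le_left _ _))
    · intro x hx
      obtain ⟨p, hp, hxp⟩ : ∃ p ∈ t m, x ∈ ball p (1 / (m + 1 : ℝ)) := by
        have := hcov m (mem_univ x)
        simpa using this
      rw [mem_ball] at hxp
      have hxp4 : dist x p < ε / 4 := hxp.trans hm
      have h1 : φ p g₀ ≤ dist p x := infDist_le_dist_of_mem hx
      have h2 : dist (φ p g) (φ p g₀) < ε / 4 :=
        hδ₂2 (lt_of_lt_of_le hg (min_le_right _ _)) p hp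
      rw [Real.dist_eq, abs_lt] at h2
      have h3 : φ p g < ε / 2 := by
        rw [dist_comm] at hxp4
        simp only [hφ] at *
        linarith
      obtain ⟨y, hy, hdy⟩ := (infDist_lt_iff (hne g)).1 h3
      refine ⟨y, hy, ?_⟩
      calc dist x y ≤ dist x p + dist p y := dist_triangle x p y
      _ < ε / 4 + ε / 2 := add_lt_add hxp4 hdy
      _ < ε := by linarith
  exact ⟨mem_of_superset hRres hmain,
    dense_of_mem_residual (mem_of_superset hRres hmain)⟩
end

section
/- Let G, X be metric spaces with X compact, and F : G → Set X a map with nonempty values. Suppose every point of F(g₀) is essential, F(g₀) is compact, and F is upper semicontinuous at g₀. Then for every ε > 0 there is δ > 0 such that d(g, g₀) < δ implies both F(g) ⊆ N_ε(F(g₀)) and F(g₀) ⊆ N_ε(F(g)); that is, the Hausdorff distance H(F(g), F(g₀)) ≤ ε. -/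
/-- If every point of `F g₀` is essential, `F g₀` is compact and `F` is usc at `g₀`, then
`F` is continuous at `g₀` in the Hausdorff sense. -/
theorem all_essential_implies_hausdorff_continuity
    {G X : Type*} [MetricSpace G] [MetricSpace X] [CompactSpace X]
    (F : G → Set X) (g₀ : G)
    (hne : ∀ g, (F g).Nonempty)
    (hcp : IsCompact (F g₀))
    (husc : ∀ ε > 0, ∃ δ > 0, ∀ g, dist g g₀ < δ →
      F g ⊆ {x | ∃ y ∈ F g₀, dist x y < ε})
    (hess : ∀ x ∈ F g₀, ∀ ε > 0, ∃ δ > 0, ∀ g, dist g g₀ < δ →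
      ∃ y ∈ F g, dist x y < ε) :
    ∀ ε > 0, ∃ δ > 0, ∀ g, dist g g₀ < δ →
      F g ⊆ {x | ∃ y ∈ F g₀, dist x y < ε} ∧
      F g₀ ⊆ {x | ∃ y ∈ F g, dist x y < ε} := by
  intro ε hε
  have hε2 : (0:ℝ) < ε / 2 := by positivity
  -- finite ε/2 net of F g₀
  obtain ⟨t, hts, htfin, hcov⟩ :=
    hcp.elim_finite_subcover_image (fun x (_ : x ∈ F g₀) => Metric.isOpen_ball)
      (fun y hy => Set.mem_biUnion hy (Metric.mem_ball_self hε2))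
  -- δ for each net point
  have key : ∀ x ∈ t, ∃ δ > 0, ∀ g, dist g g₀ < δ → ∃ y ∈ F g, dist x y < ε / 2 :=
    fun x hx => hess x (hts hx) (ε / 2) hε2
  choose! δf hδpos hδspec using key
  obtain ⟨δ₀, hδ₀, hδ₀spec⟩ := husc ε hε
  -- t nonempty since F g₀ nonempty
  obtain ⟨y₀, hy₀⟩ := hne g₀
  obtain ⟨x₀, hx₀t, _⟩ := Set.mem_iUnion₂.1 (hcov hy₀)
  have htne : htfin.toFinset.Nonempty := ⟨x₀, htfin.mem_toFinset.2 hx₀t⟩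
  set δ₁ := htfin.toFinset.inf' htne δf with hδ₁def
  refine ⟨min δ₀ δ₁, lt_min hδ₀ ?_, ?_⟩
  · exact (Finset.lt_inf'_iff htne).2 fun x hx => hδpos x (htfin.mem_toFinset.1 hx)
  intro g hg
  refine ⟨hδ₀spec g (lt_of_lt_of_le hg (min_le_left _ _)), ?_⟩
  intro z hz
  obtain ⟨x, hxt, hzx⟩ := Set.mem_iUnion₂.1 (hcov hz)
  have hgx : dist g g₀ < δf x := by
    refine lt_of_lt_of_le (lt_of_lt_of_le hg (min_le_right _ _)) ?_
    exact Finset.inf'_le _ (htfin.mem_toFinset.2 hxt)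
  obtain ⟨y, hyF, hxy⟩ := hδspec x hxt g hgx
  exact ⟨y, hyF, by
    have := Metric.mem_ball.1 hzx
    calc dist z y ≤ dist z x + dist x y := dist_triangle _ _ _
    _ < ε / 2 + ε / 2 := add_lt_add this hxy
    _ = ε := by ring⟩
end

section
/- Let Q, Q' be conservative generator matrices of size S with Q irreducible, and suppose the entrywise distance max_{i,j} |Q_{ij} − Q'_{ij}| is sufficiently small (less than a bound depending only on Q). If Q' is also irreducible with unique stationary distributions m, m' respectively (mᵀQ = 0, m'ᵀQ' = 0, both in the simplex), then ‖m − m'‖ ≤ C · max_{i,j} |Q_{ij} − Q'_{ij}| for a constant C depending only on Q. -/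
open Finset

lemma le_biSup' {S : ℕ} (hS : 0 < S) (f : Fin S → ℝ) (i : Fin S) :
    f i ≤ ⨆ j, f j := by
  have : Nonempty (Fin S) := ⟨⟨0, hS⟩⟩
  exact le_ciSup (Set.finite_range f).bddAbove i

lemma aux_pos {S : ℕ} (Q : Matrix (Fin S) (Fin S) ℝ)
    (hpos : ∀ i j, i ≠ j → 0 ≤ Q i j) (hrow : ∀ i, ∑ j, Q i j = 0)
    (hirr : ∀ i j : Fin S, i ≠ j → ∃ (k : ℕ) (p : Fin (k + 1) → Fin S),
      p 0 = i ∧ p (Fin.last k) = j ∧ ∀ l : Fin k, 0 < Q (p l.castSucc) (p l.succ))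
    (v : Fin S → ℝ) (hv : ∀ j, ∑ i, v i * Q i j = 0)
    (k : Fin S) (hk : 0 < v k) : 0 < ∑ i, v i := by
  set M : ℝ := ∑ i, |Q i i| with hM
  have hM0 : 0 ≤ M := Finset.sum_nonneg fun i _ => abs_nonneg _
  set t : ℝ := (1 + M)⁻¹ with ht
  have h1M : (0:ℝ) < 1 + M := by linarith
  have ht0 : 0 < t := inv_pos.2 h1M
  have hQii : ∀ i, Q i i ≤ 0 := by
    intro i
    have h := hrow i
    have h2 : Q i i + ∑ j ∈ univ.erase i, Q i j = ∑ j, Q i j :=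
      Finset.add_sum_erase _ _ (mem_univ i)
    have h3 : 0 ≤ ∑ j ∈ univ.erase i, Q i j :=
      Finset.sum_nonneg fun j hj => hpos i j (Ne.symm (Finset.ne_of_mem_erase hj))
    linarith
  have htQ : ∀ i, t * |Q i i| < 1 := by
    intro i
    have h1 : |Q i i| ≤ M :=
      Finset.single_le_sum (f := fun j => |Q j j|) (fun j _ => abs_nonneg _) (mem_univ i)
    have h2 : t * (1 + M) = 1 := inv_mul_cancel₀ (ne_of_gt h1M)
    nlinarith
  set P : Matrix (Fin S) (Fin S) ℝ :=
    fun i j => (if i = j then (1:ℝ) else 0) + t * Q i j with hP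
  have hPnn : ∀ i j, 0 ≤ P i j := by
    intro i j
    by_cases hij : i = j
    · subst hij
      have h1 := htQ i
      have habs : |Q i i| = -Q i i := abs_of_nonpos (hQii i)
      show (0:ℝ) ≤ (if i = i then (1:ℝ) else 0) + t * Q i i
      rw [if_pos rfl]
      nlinarith
    · simp only [hP, if_neg hij]
      have := hpos i j hij
      nlinarith
  have hProw : ∀ i, ∑ j, P i j = 1 := by
    intro i
    simp only [hP, Finset.sum_add_distrib, Finset.sum_ite_eq, mem_univ, if_pos,
      ← Finset.mul_sum, hrow i, mul_zero, add_zero]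
  have hvP : ∀ j, ∑ i, v i * P i j = v j := by
    intro j
    simp only [hP, mul_add, Finset.sum_add_distrib, mul_ite, mul_one, mul_zero]
    rw [Finset.sum_ite_eq' univ j v]
    have : ∑ i, v i * (t * Q i j) = t * ∑ i, v i * Q i j := by
      rw [Finset.mul_sum]; congr 1; ext i; ring
    simp [this, hv j]
  have hab : ∀ j, |v j| ≤ ∑ i, |v i| * P i j := by
    intro j
    calc |v j| = |∑ i, v i * P i j| := by rw [hvP]
    _ ≤ ∑ i, |v i * P i j| := Finset.abs_sum_le_sum_abs _ _
    _ = ∑ i, |v i| * P i j := by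
        refine Finset.sum_congr rfl fun i _ => ?_
        rw [abs_mul, abs_of_nonneg (hPnn i j)]
  have hsum_eq : ∑ j, |v j| = ∑ j, ∑ i, |v i| * P i j := by
    rw [Finset.sum_comm]
    refine (Finset.sum_congr rfl fun i _ => ?_).symm
    rw [← Finset.mul_sum, hProw, mul_one]
  have heq : ∀ j, |v j| = ∑ i, |v i| * P i j := by
    have := (Finset.sum_eq_sum_iff_of_le (s := univ)
      (fun j _ => hab j)).1 hsum_eq
    exact fun j => this j (mem_univ j)
  have step : ∀ j i, 0 < v i → 0 < P i j → 0 < v j := by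
    intro j i hvi hPij
    have h1 : ∑ i', (v i' + |v i'|) * P i' j = v j + |v j| := by
      have : ∀ i', (v i' + |v i'|) * P i' j = v i' * P i' j + |v i'| * P i' j :=
        fun i' => by ring
      simp only [this, Finset.sum_add_distrib, hvP j, ← heq j]
    have h2 : 0 < ∑ i', (v i' + |v i'|) * P i' j := by
      refine Finset.sum_pos' (fun i' _ => mul_nonneg ?_ (hPnn i' j)) ⟨i, mem_univ i, ?_⟩
      · have := neg_abs_le (v i'); linarith
      · have h4 : 0 < v i + |v i| := by have := abs_nonneg (v i); linarith
        exact mul_pos h4 hPij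
    have h3 : 0 < v j + |v j| := h1 ▸ h2
    rcases abs_cases (v j) with ⟨he, _⟩ | ⟨he, _⟩ <;> linarith
  have hall : ∀ j, 0 < v j := by
    intro j
    by_cases hjk : j = k
    · subst hjk; exact hk
    obtain ⟨n, p, hp0, hpl, hppos⟩ := hirr k j (Ne.symm hjk)
    have hchain : ∀ l : Fin (n + 1), 0 < v (p l) := by
      intro l
      induction l using Fin.induction with
      | zero => rw [hp0]; exact hk
      | succ l ih =>
        refine step _ _ ih ?_
        have hQ := hppos l
        have : (0:ℝ) ≤ if p l.castSucc = p l.succ then (1:ℝ) else 0 := by positivity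
        have : 0 < t * Q (p l.castSucc) (p l.succ) := by positivity
        simp only [hP]
        have hite : (0:ℝ) ≤ if p l.castSucc = p l.succ then (1:ℝ) else 0 := by positivity
        linarith
    have := hchain (Fin.last n)
    rwa [hpl] at this
  exact Finset.sum_pos (fun i _ => hall i) ⟨k, mem_univ k⟩

lemma ker_zero {S : ℕ} (Q : Matrix (Fin S) (Fin S) ℝ)
    (hpos : ∀ i j, i ≠ j → 0 ≤ Q i j) (hrow : ∀ i, ∑ j, Q i j = 0)
    (hirr : ∀ i j : Fin S, i ≠ j → ∃ (k : ℕ) (p : Fin (k + 1) → Fin S),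
      p 0 = i ∧ p (Fin.last k) = j ∧ ∀ l : Fin k, 0 < Q (p l.castSucc) (p l.succ))
    (v : Fin S → ℝ) (hv : ∀ j, ∑ i, v i * Q i j = 0)
    (hsum : ∑ i, v i = 0) : v = 0 := by
  by_contra h
  obtain ⟨k, hk⟩ := Function.ne_iff.1 h
  rcases lt_or_gt_of_ne hk with hneg | hposk
  · have hv' : ∀ j, ∑ i, (-v) i * Q i j = 0 := by
      intro j
      simp only [Pi.neg_apply, neg_mul, Finset.sum_neg_distrib, hv j, neg_zero]
    have := aux_pos Q hpos hrow hirr (-v) hv' k (by simpa using hneg)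
    simp only [Pi.neg_apply, Finset.sum_neg_distrib, hsum, neg_zero] at this
    exact lt_irrefl 0 this
  · have := aux_pos Q hpos hrow hirr v hv k hposk
    rw [hsum] at this
    exact lt_irrefl 0 this

/-- Quantitative Lipschitz stability of the stationary distribution of an irreducible
conservative generator under entrywise perturbations. -/
theorem stationary_distribution_lipschitz
    {S : ℕ} (hS : 0 < S) (Q : Matrix (Fin S) (Fin S) ℝ)
    (hgen : (∀ i j, i ≠ j → 0 ≤ Q i j) ∧ ∀ i, ∑ j, Q i j = 0)
    (hirr : ∀ i j : Fin S, i ≠ j → ∃ (k : ℕ) (p : Fin (k + 1) → Fin S),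
      p 0 = i ∧ p (Fin.last k) = j ∧ ∀ l : Fin k, 0 < Q (p l.castSucc) (p l.succ)) :
    ∃ δ > 0, ∃ C > 0, ∀ Q' : Matrix (Fin S) (Fin S) ℝ,
      ((∀ i j, i ≠ j → 0 ≤ Q' i j) ∧ ∀ i, ∑ j, Q' i j = 0) →
      (∀ i j : Fin S, i ≠ j → ∃ (k : ℕ) (p : Fin (k + 1) → Fin S),
        p 0 = i ∧ p (Fin.last k) = j ∧ ∀ l : Fin k, 0 < Q' (p l.castSucc) (p l.succ)) →
      (⨆ i, ⨆ j, |Q i j - Q' i j|) < δ →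
      ∀ m m' : Fin S → ℝ,
        ((∀ i, 0 ≤ m i) ∧ ∑ i, m i = 1 ∧ ∀ j, ∑ i, m i * Q i j = 0) →
        ((∀ i, 0 ≤ m' i) ∧ ∑ i, m' i = 1 ∧ ∀ j, ∑ i, m' i * Q' i j = 0) →
        ‖m - m'‖ ≤ C * ⨆ i, ⨆ j, |Q i j - Q' i j| := by
  obtain ⟨hpos, hrow⟩ := hgen
  set j₀ : Fin S := ⟨0, hS⟩ with hj₀
  set A : Matrix (Fin S) (Fin S) ℝ :=
    fun j i => if j = j₀ then 1 else Q i j with hA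
  -- injectivity of A
  have hker : ∀ v, A.mulVec v = 0 → v = 0 := by
    intro v hAv
    have hsum : ∑ i, v i = 0 := by
      have := congrFun hAv j₀
      simpa [Matrix.mulVec, dotProduct, hA] using this
    have hvj : ∀ j, j ≠ j₀ → ∑ i, v i * Q i j = 0 := by
      intro j hj
      have := congrFun hAv j
      simp only [Matrix.mulVec, dotProduct, hA, if_neg hj, Pi.zero_apply] at this
      rw [← this]
      exact Finset.sum_congr rfl fun i _ => mul_comm _ _
    have hvall : ∀ j, ∑ i, v i * Q i j = 0 := by
      intro j
      by_cases hj : j = j₀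
      · subst hj
        have htot : ∑ j, ∑ i, v i * Q i j = 0 := by
          rw [Finset.sum_comm]
          refine Finset.sum_eq_zero fun i _ => ?_
          rw [← Finset.mul_sum, hrow i, mul_zero]
        have hrest : ∑ j ∈ Finset.univ.erase j₀, ∑ i, v i * Q i j = 0 :=
          Finset.sum_eq_zero fun j hj => hvj j (Finset.ne_of_mem_erase hj)
        have := Finset.add_sum_erase Finset.univ
          (fun j => ∑ i, v i * Q i j) (Finset.mem_univ j₀)
        rw [htot, hrest] at this
        linarith
      · exact hvj j hj
    exact ker_zero Q hpos hrow hirr v hvall hsum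
  have hinj : Function.Injective A.mulVec := by
    intro x y hxy
    have : A.mulVec (x - y) = 0 := by
      rw [Matrix.mulVec_sub, hxy, sub_self]
    have := hker _ this
    exact sub_eq_zero.1 this
  have hunit : IsUnit A.det := (Matrix.isUnit_iff_isUnit_det A).1 (Matrix.mulVec_injective_iff_isUnit.1 hinj)
  set B : Matrix (Fin S) (Fin S) ℝ := A⁻¹ with hB
  have hBA : B * A = 1 := Matrix.nonsing_inv_mul A hunit
  set K : ℝ := ∑ i, ∑ j, |B i j| with hK
  have hK0 : 0 ≤ K := Finset.sum_nonneg fun i _ =>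
    Finset.sum_nonneg fun j _ => abs_nonneg _
  refine ⟨1, one_pos, K + 1, by linarith, ?_⟩
  intro Q' ⟨hpos', hrow'⟩ _ _ m m' ⟨hm0, hm1, hmQ⟩ ⟨hm0', hm1', hmQ'⟩
  set ε : ℝ := ⨆ i, ⨆ j, |Q i j - Q' i j| with hε
  have hεle : ∀ i j, |Q i j - Q' i j| ≤ ε := by
    intro i j
    calc |Q i j - Q' i j| ≤ ⨆ j', |Q i j' - Q' i j'| :=
          le_biSup' hS (fun j' => |Q i j' - Q' i j'|) j
    _ ≤ ε := le_biSup' hS (fun i' => ⨆ j', |Q i' j' - Q' i' j'|) i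
  have hε0 : 0 ≤ ε := le_trans (abs_nonneg _) (hεle j₀ j₀)
  set D : Matrix (Fin S) (Fin S) ℝ :=
    fun j i => if j = j₀ then 0 else Q' i j - Q i j with hD
  have hDle : ∀ j i, |D j i| ≤ ε := by
    intro j i
    by_cases hj : j = j₀
    · simp only [hD, if_pos hj, abs_zero]; exact hε0
    · simp only [hD, if_neg hj]
      rw [abs_sub_comm]
      exact hεle i j
  have hstep : A.mulVec (m - m') = D.mulVec m' := by
    ext j
    by_cases hj : j = j₀
    · subst hj
      simp only [Matrix.mulVec, dotProduct, hA, hD, if_pos rfl, one_mul,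
        zero_mul, Pi.sub_apply, Finset.sum_sub_distrib, hm1, hm1',
        Finset.sum_const_zero, sub_self]
    · simp only [Matrix.mulVec, dotProduct, hA, hD, if_neg hj, Pi.sub_apply]
      have e1 : ∑ i, Q i j * (m i - m' i)
          = ∑ i, m i * Q i j - ∑ i, m' i * Q i j := by
        rw [← Finset.sum_sub_distrib]
        exact Finset.sum_congr rfl fun i _ => by ring
      have e2 : ∑ i, (Q' i j - Q i j) * m' i
          = ∑ i, m' i * Q' i j - ∑ i, m' i * Q i j := by
        rw [← Finset.sum_sub_distrib]
        exact Finset.sum_congr rfl fun i _ => by ring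
      rw [e1, e2, hmQ j, hmQ' j]
  have hrep : m - m' = B.mulVec (D.mulVec m') := by
    rw [← hstep, Matrix.mulVec_mulVec, hBA, Matrix.one_mulVec]
  set w : Fin S → ℝ := D.mulVec m' with hw
  have hwle : ‖w‖ ≤ ε := by
    rw [pi_norm_le_iff_of_nonneg hε0]
    intro j
    rw [Real.norm_eq_abs]
    calc |w j| = |∑ i, D j i * m' i| := rfl
    _ ≤ ∑ i, |D j i * m' i| := Finset.abs_sum_le_sum_abs _ _
    _ ≤ ∑ i, ε * m' i := by
        refine Finset.sum_le_sum fun i _ => ?_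
        rw [abs_mul, abs_of_nonneg (hm0' i)]
        exact mul_le_mul_of_nonneg_right (hDle j i) (hm0' i)
    _ = ε := by rw [← Finset.mul_sum, hm1', mul_one]
  have hnorm : ‖m - m'‖ ≤ K * ‖w‖ := by
    rw [hrep, pi_norm_le_iff_of_nonneg (mul_nonneg hK0 (norm_nonneg _))]
    intro i
    rw [Real.norm_eq_abs]
    calc |B.mulVec w i| = |∑ j, B i j * w j| := rfl
    _ ≤ ∑ j, |B i j * w j| := Finset.abs_sum_le_sum_abs _ _
    _ ≤ ∑ j, |B i j| * ‖w‖ := by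
        refine Finset.sum_le_sum fun j _ => ?_
        rw [abs_mul]
        exact mul_le_mul_of_nonneg_left
          ((Real.norm_eq_abs (w j)) ▸ norm_le_pi_norm w j) (abs_nonneg _)
    _ = (∑ j, |B i j|) * ‖w‖ := by rw [Finset.sum_mul]
    _ ≤ K * ‖w‖ := by
        refine mul_le_mul_of_nonneg_right ?_ (norm_nonneg _)
        exact Finset.single_le_sum
          (f := fun i => ∑ j, |B i j|)
          (fun i _ => Finset.sum_nonneg fun j _ => abs_nonneg _) (Finset.mem_univ i)
  calc ‖m - m'‖ ≤ K * ‖w‖ := hnorm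
  _ ≤ K * ε := mul_le_mul_of_nonneg_left hwle hK0
  _ ≤ (K + 1) * ε := by nlinarith
end
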